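/- arXiv:1708.05063 — 6 statements merged into one kernel-verified Lean document; each statement's English description precedes it below -/
import Mathlib

section
/- The region automaton Reg(A) of a discrete timed automaton A is empty iff A is empty: A has an accepting run from (l₀, 0) to some (f, ν) with f final iff Reg(A) has a path from (l₀, 0^|X|) to some location (f, ν̂) with f final. -/
/-!
Abstract a clock value `n` to `n` itself when `n ≤ K` and to `∞` otherwise. Since every guard
constant is at most `K`, a valuation and its abstraction satisfy the same guards, resets commute
with abstraction, and a unit tick of `Reg(A)` is exactly the abstraction of letting one time unit
elapse. Hence a run of `A` abstracts to a path of `Reg(A)` (a delay `t` becomes `t` ticks), and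
conversely every state reachable in `Reg(A)` is the abstraction of `ν + t` for some valuation
`ν` reachable in `A` and some pending delay `t`, which is spent by the next discrete edge.
-/

/-- Comparison operators appearing in clock constraints. -/
inductive CmpOp | lt | le | eq | gt | ge

/-- Satisfaction of an atomic constraint `v ⋈ k` over natural-valued clocks. -/
def CmpOp.satN : CmpOp → ℕ → ℕ → Prop
  | .lt, v, k => v < k
  | .le, v, k => v ≤ k
  | .eq, v, k => v = k
  | .gt, v, k => v > k
  | .ge, v, k => v ≥ k

/-- Satisfaction over truncated values in `{0,…,K,∞}`. -/
def CmpOp.satE : CmpOp → ℕ∞ → ℕ → Prop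
  | .lt, v, k => v < (k : ℕ∞)
  | .le, v, k => v ≤ (k : ℕ∞)
  | .eq, v, k => v = (k : ℕ∞)
  | .gt, v, k => v > (k : ℕ∞)
  | .ge, v, k => v ≥ (k : ℕ∞)

/-- A clock constraint: a finite conjunction of atoms `x ⋈ k`. -/
abbrev TGuard (X : Type) := List (X × CmpOp × ℕ)

def TGuard.satN {X : Type} (g : TGuard X) (ν : X → ℕ) : Prop :=
  ∀ a ∈ g, CmpOp.satN a.2.1 (ν a.1) a.2.2

def TGuard.satE {X : Type} (g : TGuard X) (ρ : X → ℕ∞) : Prop :=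
  ∀ a ∈ g, CmpOp.satE a.2.1 (ρ a.1) a.2.2

/-- A discrete timed automaton with locations `L`, clocks `X` and actions `A`:
edges are tuples `(l, g, a, Y, l')`. -/
structure DTA (L X A : Type) [DecidableEq X] where
  init : L
  final : L → Prop
  edges : Set (L × TGuard X × A × Finset X × L)

variable {L X A : Type} [DecidableEq X]

/-- One transition `(l,ν) →(t,e) (l',ν')` of the timed semantics: elapse `t`, check the
guard on `ν+t`, reset the clocks in `Y`. -/
def dtaStepDur (M : DTA L X A) (t : ℕ) (s s' : L × (X → ℕ)) : Prop :=
  ∃ g a Y, (s.1, g, a, Y, s'.1) ∈ M.edges ∧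
    TGuard.satN g (fun x => s.2 x + t) ∧
    s'.2 = fun x => if x ∈ Y then 0 else s.2 x + t

def dtaStep (M : DTA L X A) (s s' : L × (X → ℕ)) : Prop := ∃ t, dtaStepDur M t s s'

/-- Unit time elapse on truncated valuations: components exceeding `K` become `∞`. -/
def tickE (K : ℕ) (ρ : X → ℕ∞) : X → ℕ∞ :=
  fun x => if ρ x + 1 ≤ (K : ℕ∞) then ρ x + 1 else ⊤

/-- A discrete edge of the region automaton. -/
def regDisc (M : DTA L X A) (s s' : L × (X → ℕ∞)) : Prop :=
  ∃ g a Y, (s.1, g, a, Y, s'.1) ∈ M.edges ∧ TGuard.satE g s.2 ∧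
    s'.2 = fun x => if x ∈ Y then 0 else s.2 x

/-- A transition of the region automaton `Reg(M)`: either a unit tick or a discrete edge. -/
def regStep (M : DTA L X A) (K : ℕ) (s s' : L × (X → ℕ∞)) : Prop :=
  (s'.1 = s.1 ∧ s'.2 = tickE K s.2) ∨ regDisc M s s'

def truncate (K n : ℕ) : ℕ∞ := if n ≤ K then n else ⊤

@[simp]
lemma truncate_zero (K : ℕ) : truncate K 0 = 0 := by
  simp [truncate]

lemma truncate_add_one (K n : ℕ) :
    (if truncate K n + 1 ≤ (K : ℕ∞) then truncate K n + 1 else ⊤) = truncate K (n + 1) := by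
  unfold truncate
  by_cases hn : n + 1 ≤ K
  · rw [if_pos (show n ≤ K by omega), if_pos hn, if_pos (by exact_mod_cast hn)]
    push_cast; rfl
  · rw [if_neg hn]
    split_ifs with hle hlt
    · exact absurd (by exact_mod_cast hlt) hn
    all_goals rfl

lemma CmpOp.satE_truncate_iff {K k : ℕ} (hk : k ≤ K) (op : CmpOp) (v : ℕ) :
    op.satE (truncate K v) k ↔ op.satN v k := by
  unfold truncate
  split_ifs with hv
  · cases op <;> simp [CmpOp.satE, CmpOp.satN]
  · cases op <;> simp [CmpOp.satE, CmpOp.satN] <;> omega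

lemma TGuard.satE_truncate_iff {C : Type} {K : ℕ} {g : TGuard C} (hg : ∀ a ∈ g, a.2.2 ≤ K)
    (ν : C → ℕ) : g.satE (truncate K ∘ ν) ↔ g.satN ν :=
  forall₂_congr fun a ha => CmpOp.satE_truncate_iff (hg a ha) _ _

lemma tickE_truncate {C : Type} (K : ℕ) (ν : C → ℕ) :
    tickE K (truncate K ∘ ν) = truncate K ∘ (ν · + 1) :=
  funext fun x => truncate_add_one K (ν x)

lemma truncate_comp_reset (K : ℕ) (Y : Finset X) (ν : X → ℕ) :
    truncate K ∘ (fun x => if x ∈ Y then 0 else ν x) =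
      fun x => if x ∈ Y then 0 else truncate K (ν x) := by
  funext x
  by_cases hx : x ∈ Y <;> simp [hx]

namespace DTA

def GuardsLE (M : DTA L X A) (K : ℕ) : Prop :=
  ∀ e ∈ M.edges, ∀ a ∈ e.2.1, a.2.2 ≤ K

variable {M : DTA L X A} {K : ℕ}

lemma reflTransGen_regStep_delay (l : L) (ν : X → ℕ) (t : ℕ) :
    Relation.ReflTransGen (regStep M K) (l, truncate K ∘ ν) (l, truncate K ∘ (ν · + t)) := by
  induction t with
  | zero => exact .refl
  | succ t ih =>
    refine ih.tail (Or.inl ⟨rfl, ?_⟩)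
    simp only [tickE_truncate, ← add_assoc]

lemma reflTransGen_regStep_of_dtaStep (hK : M.GuardsLE K) {s s' : L × (X → ℕ)}
    (h : dtaStep M s s') :
    Relation.ReflTransGen (regStep M K) (s.1, truncate K ∘ s.2) (s'.1, truncate K ∘ s'.2) := by
  obtain ⟨t, g, a, Y, he, hg, hs'⟩ := h
  refine (reflTransGen_regStep_delay s.1 s.2 t).tail (Or.inr ⟨g, a, Y, he, ?_, ?_⟩)
  · exact (TGuard.satE_truncate_iff (hK _ he) _).mpr hg
  · dsimp only
    rw [hs', truncate_comp_reset]
    rfl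

lemma reflTransGen_regStep_of_reflTransGen_dtaStep (hK : M.GuardsLE K) {s s' : L × (X → ℕ)}
    (h : Relation.ReflTransGen (dtaStep M) s s') :
    Relation.ReflTransGen (regStep M K) (s.1, truncate K ∘ s.2) (s'.1, truncate K ∘ s'.2) :=
  Relation.ReflTransGen.lift' (fun s : L × (X → ℕ) => (s.1, truncate K ∘ s.2))
    (fun _ _ => reflTransGen_regStep_of_dtaStep hK) _ _ h

lemma exists_dtaStep_of_regDisc (hK : M.GuardsLE K) {l : L} {ν : X → ℕ} {t : ℕ}
    {s' : L × (X → ℕ∞)} (h : regDisc M (l, truncate K ∘ (ν · + t)) s') :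
    ∃ ν', dtaStep M (l, ν) (s'.1, ν') ∧ s'.2 = truncate K ∘ ν' := by
  obtain ⟨g, a, Y, he, hg, hs'⟩ := h
  refine ⟨fun x => if x ∈ Y then 0 else ν x + t,
    ⟨t, g, a, Y, he, (TGuard.satE_truncate_iff (hK _ he) _).mp hg, rfl⟩, ?_⟩
  rw [hs', truncate_comp_reset]
  rfl

lemma exists_reflTransGen_dtaStep_of_reflTransGen_regStep (hK : M.GuardsLE K) {l : L}
    {ν : X → ℕ} {s : L × (X → ℕ∞)}
    (h : Relation.ReflTransGen (regStep M K) (l, truncate K ∘ ν) s) :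
    ∃ ν' t, Relation.ReflTransGen (dtaStep M) (l, ν) (s.1, ν') ∧
      s.2 = truncate K ∘ (ν' · + t) := by
  induction h with
  | refl => exact ⟨ν, 0, .refl, rfl⟩
  | @tail u u' _ hstep ih =>
    obtain ⟨ν', t, hrun, hs⟩ := ih
    rcases hstep with ⟨hl, htick⟩ | hdisc
    · refine ⟨ν', t + 1, hl ▸ hrun, ?_⟩
      rw [htick, hs, tickE_truncate]
      simp only [add_assoc]
    · obtain ⟨l', ρ⟩ := u
      obtain rfl : ρ = _ := hs
      obtain ⟨ν'', hstep', hs'⟩ := exists_dtaStep_of_regDisc hK hdisc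
      exact ⟨ν'', 0, hrun.tail hstep', hs'⟩

end DTA

/-- `Reg(A)` is empty iff `A` is empty: `A` has a run from `(l₀,0)` to a final
location iff `Reg(A)` has a path from `(l₀,0^|X|)` to a final location (all guard constants
being at most `K`). -/
theorem stmt4 (M : DTA L X A) (K : ℕ)
    (hK : ∀ e ∈ M.edges, ∀ a ∈ e.2.1, a.2.2 ≤ K) :
    (∃ (l : L) (ν : X → ℕ), M.final l ∧
        Relation.ReflTransGen (dtaStep M) (M.init, fun _ => 0) (l, ν)) ↔
    (∃ (l : L) (ρ : X → ℕ∞), M.final l ∧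
        Relation.ReflTransGen (regStep M K) (M.init, fun _ => 0) (l, ρ)) := by
  have hzero : truncate K ∘ (fun _ : X => 0) = fun _ => 0 := funext fun _ => truncate_zero K
  constructor
  · rintro ⟨l, ν, hf, hrun⟩
    refine ⟨l, truncate K ∘ ν, hf, ?_⟩
    simpa only [hzero] using DTA.reflTransGen_regStep_of_reflTransGen_dtaStep hK hrun
  · rintro ⟨l, ρ, hf, hrun⟩
    rw [← hzero] at hrun
    obtain ⟨ν, -, hν, -⟩ := DTA.exists_reflTransGen_dtaStep_of_reflTransGen_regStep hK hrun
    exact ⟨l, ν, hf, hν⟩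
end

section
/- The subset sum problem reduces to reachability in a two-process CTA: given positive integers a₁,…,aₙ and target c, the CTA constructed below reaches location r_f iff there exists T ⊆ {1,…,n} with Σ_{i∈T} aᵢ = c. -/
/-- Channel operations of the writer `A`. -/
inductive OpA (α : Type) | nop | write (a : α)

/-- Channel operations of the reader `B`: a read checks that the age lies in interval `I`. -/
inductive OpB (α : Type) | nop | read (a : α) (I : Set ℕ)

/-- A CTA with two timed automata `A`, `B`, disjoint clock sets `XA`, `XB` (no global
clocks), and a single channel `c_{A,B}` from `A` to `B` over alphabet `α`. -/
structure TwoCTA (LA LB XA XB α : Type) [DecidableEq XA] [DecidableEq XB] where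
  initA : LA
  initB : LB
  edgesA : Set (LA × TGuard XA × OpA α × Finset XA × LA)
  edgesB : Set (LB × TGuard XB × OpB α × Finset XB × LB)

/-- Configurations: locations and valuations of the two automata, and the channel content
(newest message first, head of the channel last). -/
abbrev Conf2 (LA LB XA XB α : Type) :=
  (LA × (XA → ℕ)) × (LB × (XB → ℕ)) × List (α × ℕ)

variable {LA LB XA XB α : Type} [DecidableEq XA] [DecidableEq XB]

/-- One transition of the CTA, labelled by its duration (discrete transitions have
duration `0`): time elapse, internal moves, a write appending `(a,0)`, or a read of the
head message subject to its age constraint. -/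
inductive StepD (M : TwoCTA LA LB XA XB α) :
    ℕ → Conf2 LA LB XA XB α → Conf2 LA LB XA XB α → Prop
  | time (t : ℕ) (lA : LA) (νA : XA → ℕ) (lB : LB) (νB : XB → ℕ) (w : List (α × ℕ)) :
      StepD M t ((lA, νA), (lB, νB), w)
        ((lA, fun x => νA x + t), (lB, fun x => νB x + t), w.map fun p => (p.1, p.2 + t))
  | anop {lA : LA} {νA : XA → ℕ} {g : TGuard XA} {Y : Finset XA} {lA' : LA}
      (lB : LB) (νB : XB → ℕ) (w : List (α × ℕ)) :
      (lA, g, OpA.nop, Y, lA') ∈ M.edgesA → TGuard.satN g νA →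
      StepD M 0 ((lA, νA), (lB, νB), w)
        ((lA', fun x => if x ∈ Y then 0 else νA x), (lB, νB), w)
  | awrite {lA : LA} {νA : XA → ℕ} {g : TGuard XA} {a : α} {Y : Finset XA} {lA' : LA}
      (lB : LB) (νB : XB → ℕ) (w : List (α × ℕ)) :
      (lA, g, OpA.write a, Y, lA') ∈ M.edgesA → TGuard.satN g νA →
      StepD M 0 ((lA, νA), (lB, νB), w)
        ((lA', fun x => if x ∈ Y then 0 else νA x), (lB, νB), (a, 0) :: w)
  | bnop {lB : LB} {νB : XB → ℕ} {g : TGuard XB} {Y : Finset XB} {lB' : LB}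
      (lA : LA) (νA : XA → ℕ) (w : List (α × ℕ)) :
      (lB, g, OpB.nop, Y, lB') ∈ M.edgesB → TGuard.satN g νB →
      StepD M 0 ((lA, νA), (lB, νB), w)
        ((lA, νA), (lB', fun x => if x ∈ Y then 0 else νB x), w)
  | bread {lB : LB} {νB : XB → ℕ} {g : TGuard XB} {a : α} {I : Set ℕ} {Y : Finset XB}
      {lB' : LB} {t : ℕ} (lA : LA) (νA : XA → ℕ) (w : List (α × ℕ)) :
      (lB, g, OpB.read a I, Y, lB') ∈ M.edgesB → TGuard.satN g νB → t ∈ I →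
      StepD M 0 ((lA, νA), (lB, νB), w ++ [(a, t)])
        ((lA, νA), (lB', fun x => if x ∈ Y then 0 else νB x), w)

/-- Reachability together with the total elapsed time (sum of durations of timed
transitions), starting from the initial configuration with empty channel. -/
inductive ReachT (M : TwoCTA LA LB XA XB α) : ℕ → Conf2 LA LB XA XB α → Prop
  | init : ReachT M 0 ((M.initA, fun _ => 0), (M.initB, fun _ => 0), [])
  | step {T : ℕ} {γ : Conf2 LA LB XA XB α} {t : ℕ} {γ' : Conf2 LA LB XA XB α} :
      ReachT M T γ → StepD M t γ γ' → ReachT M (T + t) γ'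

/-- The two clocks `x`, `y` of process `B` in the subset-sum gadget. -/
inductive BClock | x | y
  deriving DecidableEq

/-- The subset-sum CTA: `A` has locations `s_{a₁},…,s_{aₙ}` (plus an end location), no
clocks, and writes message `i` (standing for `aᵢ`) while moving from `s_{aᵢ}` to
`s_{a_{i+1}}`.  `B` has clocks `x,y` and locations `r_{a₁},…,r_{aₙ}` plus `r_f`; from
`r_{aᵢ}` it reads message `i` either checking `x = aᵢ` and resetting `x` (including `aᵢ`)
or checking `x = 0` (excluding it); from the last location it moves to `r_f` iff `x = 0`
and `y = c`.  Clock `y` is never reset. -/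
def ssCTA (n : ℕ) (a : Fin n → ℕ) (c : ℕ) :
    TwoCTA (Fin (n + 1)) (Fin (n + 1) ⊕ Unit) Empty BClock (Fin n) where
  initA := 0
  initB := Sum.inl 0
  edgesA := {e | ∃ i : Fin n, e = (i.castSucc, [], OpA.write i, ∅, i.succ)}
  edgesB :=
    {e | ∃ i : Fin n, e = (Sum.inl i.castSucc, [(BClock.x, CmpOp.eq, a i)],
        OpB.read i Set.univ, {BClock.x}, Sum.inl i.succ)} ∪
    {e | ∃ i : Fin n, e = (Sum.inl i.castSucc, [(BClock.x, CmpOp.eq, 0)],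
        OpB.read i Set.univ, ∅, Sum.inl i.succ)} ∪
    {(Sum.inl (Fin.last n), [(BClock.x, CmpOp.eq, 0), (BClock.y, CmpOp.eq, c)],
        OpB.nop, ∅, Sum.inr ())}

/-!
Along any run, `B` maintains the invariant that, in location `r_q`, the value of `y` is the
sum of `x` and of the `aᵢ` with `i < q` it has included so far (each inclusion happens exactly
when `x = aᵢ`, and resets `x`). Entering `r_f` requires `x = 0` and `y = c`, so the included
`aᵢ` sum to `c`. Conversely, given `T` with `∑ T = c`, let time elapse by `aᵢ` before the
`i`-th message exactly when `i ∈ T`, and have `B` read every message as soon as it is written.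
-/

@[simp]
theorem TGuard.satN_nil {X : Type} (ν : X → ℕ) : TGuard.satN [] ν := by
  simp [TGuard.satN]

@[simp]
theorem TGuard.satN_cons {X : Type} (p : X × CmpOp × ℕ) (g : TGuard X) (ν : X → ℕ) :
    TGuard.satN (p :: g) ν ↔ CmpOp.satN p.2.1 (ν p.1) p.2.2 ∧ TGuard.satN g ν := by
  simp [TGuard.satN]

namespace ReachT

variable {M : TwoCTA LA LB XA XB α}

theorem step_of_eq {T t T' : ℕ} {γ γ' γ'' : Conf2 LA LB XA XB α} (h : ReachT M T γ)
    (hs : StepD M t γ γ') (hT : T + t = T') (hγ : γ' = γ'') : ReachT M T' γ'' :=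
  hT ▸ hγ ▸ h.step hs

end ReachT

theorem Finset.sum_filter_le_eq_sum_filter_lt_add {ι M : Type*} [LinearOrder ι] [AddCommMonoid M]
    (S : Finset ι) (f : ι → M) (i : ι) :
    ∑ j ∈ S with j ≤ i, f j = ∑ j ∈ S with j < i, f j + if i ∈ S then f i else 0 := by
  rw [Finset.sum_filter, Finset.sum_filter, ← Finset.sum_ite_eq' S i f, ← Finset.sum_add_distrib]
  refine Finset.sum_congr rfl fun j _ => ?_
  rcases lt_trichotomy j i with h | rfl | h
  · simp [h.le, h.ne, h.not_ge]
  · simp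
  · simp [h.not_ge, h.not_gt, h.ne']

def BClock.valuation (u v : ℕ) : BClock → ℕ
  | .x => u
  | .y => v

namespace ssCTA

variable {n : ℕ} {a : Fin n → ℕ} {c : ℕ}

theorem mem_edgesB_read {l l' : Fin (n + 1) ⊕ Unit} {g : TGuard BClock} {b : Fin n}
    {I : Set ℕ} {Y : Finset BClock}
    (h : (l, g, OpB.read b I, Y, l') ∈ (ssCTA n a c).edgesB) :
    l = .inl b.castSucc ∧ l' = .inl b.succ ∧
      (g = [(.x, .eq, a b)] ∧ Y = {.x} ∨ g = [(.x, .eq, 0)] ∧ Y = ∅) := by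
  simp only [ssCTA, Set.mem_union, Set.mem_ofPred_eq, Set.mem_singleton_iff, Prod.mk.injEq,
    OpB.read.injEq, reduceCtorEq, and_false, false_and, or_false] at h
  aesop

theorem mem_edgesB_nop {l l' : Fin (n + 1) ⊕ Unit} {g : TGuard BClock} {Y : Finset BClock}
    (h : (l, g, OpB.nop, Y, l') ∈ (ssCTA n a c).edgesB) :
    l = .inl (Fin.last n) ∧ g = [(.x, .eq, 0), (.y, .eq, c)] ∧ Y = ∅ ∧ l' = .inr () := by
  simp only [ssCTA, Set.mem_union, Set.mem_ofPred_eq, Set.mem_singleton_iff, Prod.mk.injEq,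
    reduceCtorEq, and_false, false_and, exists_false, false_or] at h
  tauto

end ssCTA

def SubsetSumInv (n : ℕ) (a : Fin n → ℕ) (c : ℕ) : Fin (n + 1) ⊕ Unit → (BClock → ℕ) → Prop
  | .inl q, ν => ∃ S : Finset (Fin n), (∀ j ∈ S, (j : ℕ) < q) ∧ ∑ j ∈ S, a j + ν .x = ν .y
  | .inr _, _ => ∃ S : Finset (Fin n), ∑ j ∈ S, a j = c

namespace SubsetSumInv

variable {n : ℕ} {a : Fin n → ℕ} {c : ℕ}

theorem read_include {b : Fin n} {ν : BClock → ℕ} (hν : ν .x = a b)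
    (h : SubsetSumInv n a c (.inl b.castSucc) ν) :
    SubsetSumInv n a c (.inl b.succ) (fun z => if z ∈ ({.x} : Finset BClock) then 0 else ν z) := by
  obtain ⟨S, hlt, hsum⟩ := h
  have hbS : b ∉ S := fun hb => by simpa using hlt b hb
  refine ⟨insert b S, ?_, ?_⟩
  · intro j hj
    rcases Finset.mem_insert.mp hj with rfl | hj
    · simp
    · simpa using (hlt j hj).trans (Nat.lt_succ_self _)
  · simp only [Finset.sum_insert hbS, Finset.mem_singleton, if_true, reduceCtorEq, if_false]
    omega

theorem read_exclude {b : Fin n} {ν : BClock → ℕ}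
    (h : SubsetSumInv n a c (.inl b.castSucc) ν) :
    SubsetSumInv n a c (.inl b.succ) (fun z => if z ∈ (∅ : Finset BClock) then 0 else ν z) := by
  obtain ⟨S, hlt, hsum⟩ := h
  refine ⟨S, fun j hj => ?_, by simpa using hsum⟩
  simpa using (hlt j hj).trans (Nat.lt_succ_self _)

theorem of_stepD {t : ℕ} {γ γ' : Conf2 (Fin (n + 1)) (Fin (n + 1) ⊕ Unit) Empty BClock (Fin n)}
    (hs : StepD (ssCTA n a c) t γ γ') (h : SubsetSumInv n a c γ.2.1.1 γ.2.1.2) :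
    SubsetSumInv n a c γ'.2.1.1 γ'.2.1.2 := by
  cases hs with
  | time t lA νA lB νB w =>
    cases lB with
    | inl q =>
      obtain ⟨S, hlt, hsum⟩ := h
      exact ⟨S, hlt, by dsimp only at hsum ⊢; omega⟩
    | inr u => exact h
  | anop => exact h
  | awrite => exact h
  | bnop _ _ _ hmem hg =>
    obtain ⟨rfl, rfl, rfl, rfl⟩ := ssCTA.mem_edgesB_nop hmem
    obtain ⟨S, -, hsum⟩ := h
    simp only [TGuard.satN_cons, CmpOp.satN] at hg hsum
    exact ⟨S, by omega⟩
  | bread _ _ _ hmem hg =>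
    obtain ⟨rfl, rfl, ⟨rfl, rfl⟩ | ⟨rfl, rfl⟩⟩ := ssCTA.mem_edgesB_read hmem
    · simp only [TGuard.satN_cons, CmpOp.satN] at hg
      exact read_include hg.1 h
    · exact read_exclude h

theorem of_reachT {T : ℕ} {γ : Conf2 (Fin (n + 1)) (Fin (n + 1) ⊕ Unit) Empty BClock (Fin n)}
    (h : ReachT (ssCTA n a c) T γ) : SubsetSumInv n a c γ.2.1.1 γ.2.1.2 := by
  induction h with
  | init => exact ⟨∅, by simp⟩
  | step _ hs ih => exact of_stepD hs ih

end SubsetSumInv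

namespace ssCTA

variable {n : ℕ} {a : Fin n → ℕ} {c : ℕ}

theorem reachT_read_include {i : Fin n} {T s : ℕ} {νA : Empty → ℕ}
    (h : ReachT (ssCTA n a c) T
      ((i.castSucc, νA), (.inl i.castSucc, BClock.valuation 0 s), [])) :
    ReachT (ssCTA n a c) (T + a i)
      ((i.succ, νA), (.inl i.succ, BClock.valuation 0 (s + a i)), []) := by
  have hwait := h.step (.time (a i) _ _ _ _ [])
  have hwrite := hwait.step (.awrite _ _ [] ⟨i, rfl⟩ (TGuard.satN_nil _))
  refine hwrite.step_of_eq (.bread (t := 0) _ _ [] (Or.inl (Or.inl ⟨i, rfl⟩)) ?_ trivial)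
    rfl ?_
  · simp [CmpOp.satN, BClock.valuation]
  · refine Prod.ext (Prod.ext rfl (Subsingleton.elim _ _)) (Prod.ext (Prod.ext rfl ?_) rfl)
    funext z
    cases z <;> simp [BClock.valuation]

theorem reachT_read_exclude {i : Fin n} {T s : ℕ} {νA : Empty → ℕ}
    (h : ReachT (ssCTA n a c) T
      ((i.castSucc, νA), (.inl i.castSucc, BClock.valuation 0 s), [])) :
    ReachT (ssCTA n a c) T
      ((i.succ, νA), (.inl i.succ, BClock.valuation 0 s), []) := by
  have hwrite := h.step (.awrite _ _ [] ⟨i, rfl⟩ (TGuard.satN_nil _))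
  refine hwrite.step_of_eq (.bread (t := 0) _ _ [] (Or.inl (Or.inr ⟨i, rfl⟩)) ?_ trivial)
    rfl ?_
  · simp [CmpOp.satN, BClock.valuation]
  · exact Prod.ext (Prod.ext rfl (Subsingleton.elim _ _)) (Prod.ext (Prod.ext rfl (by simp)) rfl)

theorem reachT_prefix (S : Finset (Fin n)) (q : Fin (n + 1)) :
    ReachT (ssCTA n a c) (∑ j ∈ S with j.castSucc < q, a j)
      ((q, fun _ => 0), (.inl q, BClock.valuation 0 (∑ j ∈ S with j.castSucc < q, a j)), []) := by
  induction q using Fin.induction with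
  | zero =>
    have hval : BClock.valuation 0 0 = fun _ => 0 := by funext z; cases z <;> rfl
    simp only [Fin.not_lt_zero, Finset.filter_false, Finset.sum_empty, hval]
    exact ReachT.init
  | succ i ih =>
    simp only [Fin.castSucc_lt_castSucc_iff] at ih
    simp only [Fin.castSucc_lt_succ_iff, Finset.sum_filter_le_eq_sum_filter_lt_add]
    split_ifs
    · exact reachT_read_include ih
    · exact reachT_read_exclude ih

theorem reachT_final {S : Finset (Fin n)} (hS : ∑ i ∈ S, a i = c) :
    ReachT (ssCTA n a c) c
      ((Fin.last n, fun _ => 0), (.inr (), BClock.valuation 0 c), []) := by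
  have h := reachT_prefix (a := a) (c := c) S (Fin.last n)
  simp only [Fin.castSucc_lt_last, Finset.filter_true, hS] at h
  refine h.step_of_eq (.bnop _ _ [] (Or.inr rfl) ?_) (add_zero c) ?_
  · simp [CmpOp.satN, BClock.valuation]
  · simp

end ssCTA

theorem stmt7_general (n : ℕ) (a : Fin n → ℕ) (c : ℕ) :
    (∃ (T : ℕ) (lA : Fin (n + 1)) (νA : Empty → ℕ) (νB : BClock → ℕ)
        (w : List (Fin n × ℕ)),
        ReachT (ssCTA n a c) T ((lA, νA), (Sum.inr (), νB), w)) ↔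
    (∃ T : Finset (Fin n), ∑ i ∈ T, a i = c) := by
  exact ⟨fun ⟨_, _, _, _, _, h⟩ => SubsetSumInv.of_reachT h,
    fun ⟨_, hS⟩ => ⟨_, _, _, _, _, ssCTA.reachT_final hS⟩⟩

/-- subset sum reduces to reachability in a two-process CTA: the location
`r_f` is reachable in the CTA constructed from positive integers `a₁,…,aₙ` and target `c`
iff some subset of the `aᵢ` sums to `c`. -/
theorem stmt7 (n : ℕ) (a : Fin n → ℕ) (ha : ∀ i, 0 < a i) (c : ℕ) :
    (∃ (T : ℕ) (lA : Fin (n + 1)) (νA : Empty → ℕ) (νB : BClock → ℕ)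
        (w : List (Fin n × ℕ)),
        ReachT (ssCTA n a c) T ((lA, νA), (Sum.inr (), νB), w)) ↔
    (∃ T : Finset (Fin n), ∑ i ∈ T, a i = c) :=
  stmt7_general n a c
end

section
/- In the subset sum CTA gadget, if B reaches r_f then the value of clock y at r_f equals the sum of the times spent at locations r_{aᵢ} where the 'include' branch was taken, and each such time equals aᵢ; hence y = Σ_{i∈T} aᵢ for the set T of included indices. -/
/-! Clock `x` is `0` on entering every `r_{aᵢ}`, since both branches leave it at `0`. Hence the
guard of the include branch forces the wait to be `aᵢ` and that of the exclude branch forces it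
to be `0`, and `y`, which adds up all waits, ends at the sum of the included `aᵢ`. -/

open Finset

theorem eq_add_sum_range_of_succ_eq_add {n : ℕ} {y d : ℕ → ℕ}
    (hy : ∀ i < n, y (i + 1) = y i + d i) : y n = y 0 + ∑ i ∈ range n, d i := by
  induction n with
  | zero => simp
  | succ k ih =>
    rw [hy k k.lt_succ_self, ih fun i hi => hy i (hi.trans k.lt_succ_self), sum_range_succ,
      add_assoc]

section Gadget

variable {n : ℕ} {a : ℕ → ℕ} {b : ℕ → Bool} {d : ℕ → ℕ} {x : ℕ → ℕ}

theorem clock_eq_zero (hx0 : x 0 = 0)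
    (hinc : ∀ i < n, b i = true → x i + d i = a i ∧ x (i + 1) = 0)
    (hexc : ∀ i < n, b i = false → x i + d i = 0 ∧ x (i + 1) = x i + d i) :
    ∀ i ≤ n, x i = 0 := by
  intro i hi
  induction i with
  | zero => exact hx0
  | succ k ih =>
    have hk : k < n := hi
    cases hb : b k with
    | true => exact (hinc k hk hb).2
    | false => rw [(hexc k hk hb).2, (hexc k hk hb).1]

theorem wait_eq_ite (hx0 : x 0 = 0)
    (hinc : ∀ i < n, b i = true → x i + d i = a i ∧ x (i + 1) = 0)
    (hexc : ∀ i < n, b i = false → x i + d i = 0 ∧ x (i + 1) = x i + d i) :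
    ∀ i < n, d i = if b i = true then a i else 0 := by
  intro i hi
  have hxi : x i = 0 := clock_eq_zero hx0 hinc hexc i hi.le
  cases hb : b i with
  | true => simpa [hxi] using (hinc i hi hb).1
  | false => simpa [hxi] using (hexc i hi hb).1

end Gadget

/-- in the subset-sum CTA gadget, `B` traverses `r_{a₀},…,r_{a_{n-1}}` making
at each index `i` a branch choice `b i` (include/exclude) and spending `d i` time units
there.  Clock `x` satisfies: on an include branch `x + d = aᵢ` and `x` is reset; on an
exclude branch `x + d = 0` and `x` is unchanged.  Clock `y` is never reset and accumulates
all elapsed time.  Then each include wait equals `aᵢ`, and the value of `y` on reaching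
`r_f` equals the sum of the included `aᵢ`. -/
theorem stmt8 (n : ℕ) (a : ℕ → ℕ) (b : ℕ → Bool) (d : ℕ → ℕ) (x y : ℕ → ℕ)
    (hx0 : x 0 = 0) (hy0 : y 0 = 0)
    (hinc : ∀ i < n, b i = true → x i + d i = a i ∧ x (i + 1) = 0)
    (hexc : ∀ i < n, b i = false → x i + d i = 0 ∧ x (i + 1) = x i + d i)
    (hy : ∀ i < n, y (i + 1) = y i + d i) :
    (∀ i < n, b i = true → d i = a i) ∧
    y n = ∑ i ∈ (Finset.range n).filter (fun i => b i = true), a i := by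
  have hd := wait_eq_ite hx0 hinc hexc
  refine ⟨fun i hi hb => by simpa [hb] using hd i hi, ?_⟩
  calc y n = ∑ i ∈ range n, d i := by rw [eq_add_sum_range_of_succ_eq_add hy, hy0, zero_add]
    _ = ∑ i ∈ range n, if b i = true then a i else 0 :=
      sum_congr rfl fun i hi => hd i (mem_range.mp hi)
    _ = _ := (sum_filter _ _).symm
end

section
/- In the one-counter-automaton simulation of a two-process CTA (A writing to B over one channel), the invariant holds: whenever the simulation is in configuration ((l_A,ν_A),(l_B,ν_B,a),i) with stack content 1^j⊥, the automaton B is i+j time units ahead of A, and the pending message a has age i+j as seen from B. -/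
/-!
Every move changes `tB - tA` and the encoded counter `i + j` by the same amount, so
`tB = tA + (i + j)` is an invariant. A message is written with age `tB - tA = i + j`; while it
is pending `A` cannot tick, and each tick of `B` increases both its age and `i + j` by one.
-/

/-- Reachable configurations of the one-counter simulation of a two-process CTA, recording
the finite-control counter component `i ∈ {0,…,K}`, the number `j` of `1`s on the unary
stack, the total times `tA`, `tB` elapsed in `A` and in `B`, and the pending message (if
any) written by `A` and not yet read by `B`, together with its age as seen from `B`.
Each unit time elapse of `B` increments the encoded counter (into `i` below `K`, onto the
stack at `K`) and ages the pending message; each unit time elapse of `A` (only allowed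
when no message is pending, and only when the counter is positive, so `B` never falls
behind `A`) decrements it; a write records the current time difference as the message's
age; a read removes the pending message. -/
inductive SimReach (K : ℕ) : ℕ → ℕ → ℕ → ℕ → Option ℕ → Prop
  | init : SimReach K 0 0 0 0 none
  | btickSmall {i j tA tB p} : SimReach K i j tA tB p → i < K →
      SimReach K (i + 1) j tA (tB + 1) (p.map (· + 1))
  | btickBig {j tA tB p} : SimReach K K j tA tB p →
      SimReach K K (j + 1) tA (tB + 1) (p.map (· + 1))
  | atickPop {j tA tB} : SimReach K K (j + 1) tA tB none →
      SimReach K K j (tA + 1) tB none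
  | atickDec {i tA tB} : SimReach K (i + 1) 0 tA tB none →
      SimReach K i 0 (tA + 1) tB none
  | write {i j tA tB} : SimReach K i j tA tB none →
      SimReach K i j tA tB (some (tB - tA))
  | read {i j tA tB ag} : SimReach K i j tA tB (some ag) →
      SimReach K i j tA tB none

theorem Option.eq_succ_of_map_succ_eq_some {p : Option ℕ} {n : ℕ}
    (hp : ∀ a, p = some a → a = n) : ∀ a, p.map (· + 1) = some a → a = n + 1 := by
  cases p with
  | none => simp
  | some b =>
    rintro a ⟨⟩
    rw [hp b rfl]

namespace SimReach

variable {K i j tA tB : ℕ} {p : Option ℕ}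

theorem time_eq_add (h : SimReach K i j tA tB p) : tB = tA + (i + j) := by
  induction h <;> omega

theorem pending_age_eq (h : SimReach K i j tA tB p) : ∀ ag, p = some ag → ag = i + j := by
  induction h with
  | init | atickPop | atickDec | read => simp
  | btickSmall _ _ ih => exact Nat.add_right_comm _ _ 1 ▸ Option.eq_succ_of_map_succ_eq_some ih
  | btickBig _ ih => exact Option.eq_succ_of_map_succ_eq_some ih
  | write h =>
    rintro ag ⟨⟩
    have := h.time_eq_add
    omega

end SimReach

/-- the simulation invariant: in any reachable simulation configuration with
finite-control value `i` and stack content `1^j⊥`, automaton `B` is exactly `i + j` time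
units ahead of `A`, and the pending message (if any) has age `i + j` as seen from `B`. -/
theorem stmt11 (K i j tA tB : ℕ) (p : Option ℕ) (h : SimReach K i j tA tB p) :
    tB = tA + (i + j) ∧ ∀ ag, p = some ag → ag = i + j :=
  ⟨h.time_eq_add, h.pending_age_eq⟩
end

section
/- Reversing a stack preserves content with ages: if stack W contains, from bottom to top, the sequence m₁, d₁, m₂, d₂, …, m_p, d_p (messages mᵢ ∈ Σ and inter-write delays dᵢ ∈ ℕ, with d_i the delay after m_i), then popping W while accumulating delays and pushing (m, accumulated delay) onto stack R yields R containing, from bottom to top, (m_p, d_p), (m_{p−1}, d_{p−1}+d_p), …, (m₁, d₁+⋯+d_p); i.e., each message is paired with exactly the total time elapsed since it was written. -/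
/-!
Popping the pair `(mᵢ, dᵢ)` adds `dᵢ` to the accumulator, so after popping the pairs of indices
`p-1, …, i` the accumulator holds `dᵢ + ⋯ + d_{p-1}`. This is an induction on `p` once the
initial value of the accumulator is generalized.
-/

/-- Transfer of a write stack into a read stack.  The input list is the write stack read
from top to bottom, grouped into pairs `(m, d)` where the delay symbol `d` lies directly
above the message `m`.  Popping accumulates the delays and pushes each message paired with
the accumulated delay; the output list is the resulting read stack from bottom to top
(in push order). -/
def transfer {α : Type} (acc : ℕ) : List (α × ℕ) → List (α × ℕ)
  | [] => []
  | (m, d) :: rest => (m, acc + d) :: transfer (acc + d) rest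

theorem transfer_reverse_map_range {α : Type} (ms : ℕ → α) (ds : ℕ → ℕ) (p acc : ℕ) :
    transfer acc (((List.range p).map fun i => (ms i, ds i)).reverse) =
      (List.range p).reverse.map fun i => (ms i, acc + ∑ j ∈ Finset.Ico i p, ds j) := by
  induction p generalizing acc with
  | zero => rfl
  | succ p ih =>
    simp only [List.range_succ, List.map_append, List.reverse_append, List.map_cons,
      List.map_nil, List.reverse_cons, List.reverse_nil, List.nil_append, List.cons_append,
      transfer, ih, Nat.Ico_succ_singleton, Finset.sum_singleton, List.cons.injEq, true_and]
    refine List.map_congr_left fun i hi => ?_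
    rw [List.mem_reverse, List.mem_range] at hi
    rw [Finset.sum_Ico_succ_top hi.le]
    ring_nf

/-- if the write stack contains, from bottom to top,
`m₁, d₁, m₂, d₂, …, m_p, d_p` (here `mᵢ = ms i`, `dᵢ = ds i`, indices `0,…,p−1`), then the
transfer yields the read stack containing, from bottom to top,
`(m_p, d_p), (m_{p−1}, d_{p−1}+d_p), …, (m₁, d₁+⋯+d_p)`: each message is paired with
exactly the total delay elapsed since it was written. -/
theorem stmt14 {α : Type} (p : ℕ) (ms : ℕ → α) (ds : ℕ → ℕ) :
    transfer 0 (((List.range p).map fun i => (ms i, ds i)).reverse) =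
      (List.range p).reverse.map fun i => (ms i, ∑ j ∈ Finset.Ico i p, ds j) := by
  simpa using transfer_reverse_map_range ms ds p 0
end

section
/- In a two-process CTA (A writing to B, no global clocks), reachability is invariant under de-synchronization: a configuration with empty channel ((l_A,ν_A),(l_B,ν_B),ε) is reachable in the synchronous semantics iff it is reachable in the semantics where A is frozen after each write until B has read that message, with B allowed to elapse time independently of A, provided A later elapses the same total time. -/
variable {LA LB XA XB α : Type} [DecidableEq XA] [DecidableEq XB]

/-- A transition of the synchronous CTA semantics, of arbitrary duration. -/
def Step (M : TwoCTA LA LB XA XB α) (γ γ' : Conf2 LA LB XA XB α) : Prop :=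
  ∃ t, StepD M t γ γ'

/-- Configurations of the de-synchronized semantics: each process carries its own total
elapsed local time, and at most one message (with its age as seen from `B`) is pending. -/
abbrev DConf (LA LB XA XB α : Type) :=
  (LA × (XA → ℕ) × ℕ) × (LB × (XB → ℕ) × ℕ) × Option (α × ℕ)

/-- De-synchronized semantics: `A` is frozen after each write until `B` has read the
pending message (all `A`-moves require no pending message), `B` elapses time
independently, `A` never overtakes `B`, and a write records as age the current difference
of the local times of `B` and `A`. -/
inductive DStep (M : TwoCTA LA LB XA XB α) :
    DConf LA LB XA XB α → DConf LA LB XA XB α → Prop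
  | atime {lA : LA} {νA : XA → ℕ} {τA : ℕ} (t : ℕ) (sB : LB × (XB → ℕ) × ℕ) :
      τA + t ≤ sB.2.2 →
      DStep M ((lA, νA, τA), sB, none)
        ((lA, fun x => νA x + t, τA + t), sB, none)
  | anop {lA : LA} {νA : XA → ℕ} {τA : ℕ} {g : TGuard XA} {Y : Finset XA} {lA' : LA}
      (sB : LB × (XB → ℕ) × ℕ) :
      (lA, g, OpA.nop, Y, lA') ∈ M.edgesA → TGuard.satN g νA →
      DStep M ((lA, νA, τA), sB, none)
        ((lA', fun x => if x ∈ Y then 0 else νA x, τA), sB, none)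
  | awrite {lA : LA} {νA : XA → ℕ} {τA : ℕ} {g : TGuard XA} {a : α} {Y : Finset XA}
      {lA' : LA} (sB : LB × (XB → ℕ) × ℕ) :
      (lA, g, OpA.write a, Y, lA') ∈ M.edgesA → TGuard.satN g νA → τA ≤ sB.2.2 →
      DStep M ((lA, νA, τA), sB, none)
        ((lA', fun x => if x ∈ Y then 0 else νA x, τA), sB, some (a, sB.2.2 - τA))
  | btime {lB : LB} {νB : XB → ℕ} {τB : ℕ} (t : ℕ) (sA : LA × (XA → ℕ) × ℕ)
      (p : Option (α × ℕ)) :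
      DStep M (sA, (lB, νB, τB), p)
        (sA, (lB, fun x => νB x + t, τB + t), p.map fun q => (q.1, q.2 + t))
  | bnop {lB : LB} {νB : XB → ℕ} {τB : ℕ} {g : TGuard XB} {Y : Finset XB} {lB' : LB}
      (sA : LA × (XA → ℕ) × ℕ) (p : Option (α × ℕ)) :
      (lB, g, OpB.nop, Y, lB') ∈ M.edgesB → TGuard.satN g νB →
      DStep M (sA, (lB, νB, τB), p)
        (sA, (lB', fun x => if x ∈ Y then 0 else νB x, τB), p)
  | bread {lB : LB} {νB : XB → ℕ} {τB : ℕ} {g : TGuard XB} {a : α} {I : Set ℕ}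
      {Y : Finset XB} {lB' : LB} {ag : ℕ} (sA : LA × (XA → ℕ) × ℕ) :
      (lB, g, OpB.read a I, Y, lB') ∈ M.edgesB → TGuard.satN g νB → ag ∈ I →
      DStep M (sA, (lB, νB, τB), some (a, ag))
        (sA, (lB', fun x => if x ∈ Y then 0 else νB x, τB), none)

/-!
Both semantics are described through the local runs of `A` and `B`, each event stamped with
the local time at which it happens. A configuration with empty channel is reachable in
either semantics iff `A` and `B` have local runs to it of the same duration in which the
`i`-th read of `B` consumes the `i`-th write of `A` at a later time, the age of the message
being the difference of the two timestamps. In the synchronous semantics this holds because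
a message ages exactly as the clocks advance; in the de-synchronized one because a write
records the lead of `B` over `A` as age. Conversely, a synchronous run is obtained by
executing the events of the two local runs in the order of their timestamps, and a
de-synchronized one by running `A` up to each write and `B` up to the matching read.
-/

open Relation

section

variable {L X Op β : Type} [DecidableEq X]

/-- A run of a single timed automaton with edges `E`, from one local state
(location, valuation, total elapsed time) to another; the trace lists the observable
events `obs op` of the edges taken, each with the local time at which it occurs. -/
inductive LocalRun (E : Set (L × TGuard X × Op × Finset X × L)) (obs : Op → Option β) :
    L × (X → ℕ) × ℕ → List (β × ℕ) → L × (X → ℕ) × ℕ → Prop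
  | refl (s : L × (X → ℕ) × ℕ) : LocalRun E obs s [] s
  | delay {l : L} {ν : X → ℕ} {τ : ℕ} {tr : List (β × ℕ)} {e : L × (X → ℕ) × ℕ} (t : ℕ) :
      LocalRun E obs (l, fun x => ν x + t, τ + t) tr e → LocalRun E obs (l, ν, τ) tr e
  | silent {l : L} {ν : X → ℕ} {τ : ℕ} {g : TGuard X} {op : Op} {Y : Finset X} {l' : L}
      {tr : List (β × ℕ)} {e : L × (X → ℕ) × ℕ} :
      (l, g, op, Y, l') ∈ E → g.satN ν → obs op = none →
      LocalRun E obs (l', fun x => if x ∈ Y then 0 else ν x, τ) tr e →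
      LocalRun E obs (l, ν, τ) tr e
  | observe {l : L} {ν : X → ℕ} {τ : ℕ} {g : TGuard X} {op : Op} {Y : Finset X} {l' : L}
      {tr : List (β × ℕ)} {e : L × (X → ℕ) × ℕ} {b : β} :
      (l, g, op, Y, l') ∈ E → g.satN ν → obs op = some b →
      LocalRun E obs (l', fun x => if x ∈ Y then 0 else ν x, τ) tr e →
      LocalRun E obs (l, ν, τ) ((b, τ) :: tr) e

namespace LocalRun

variable {E : Set (L × TGuard X × Op × Finset X × L)} {obs : Op → Option β}
  {s e : L × (X → ℕ) × ℕ} {tr : List (β × ℕ)}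

theorem time_le (h : LocalRun E obs s tr e) : s.2.2 ≤ e.2.2 := by
  induction h with
  | refl => exact le_rfl
  | delay t _ ih => exact (Nat.le_add_right _ t).trans ih
  | silent _ _ _ _ ih | observe _ _ _ _ ih => exact ih

theorem time_mem_Icc (h : LocalRun E obs s tr e) {x : β × ℕ} (hx : x ∈ tr) :
    x.2 ∈ Set.Icc s.2.2 e.2.2 := by
  induction h with
  | refl => cases hx
  | delay t _ ih => exact ⟨(Nat.le_add_right _ t).trans (ih hx).1, (ih hx).2⟩
  | silent _ _ _ _ ih => exact ih hx
  | observe _ _ _ h ih =>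
    rcases List.mem_cons.1 hx with rfl | hx
    · exact ⟨le_rfl, h.time_le⟩
    · exact ih hx

theorem append {m : L × (X → ℕ) × ℕ} {tr' : List (β × ℕ)} (h : LocalRun E obs s tr m)
    (h' : LocalRun E obs m tr' e) : LocalRun E obs s (tr ++ tr') e := by
  induction h with
  | refl => exact h'
  | delay t _ ih => exact .delay t (ih h')
  | silent he hg ho _ ih => exact .silent he hg ho (ih h')
  | observe he hg ho _ ih => exact .observe he hg ho (ih h')

variable {l l' : L} {ν : X → ℕ} {τ : ℕ}

theorem snoc_delay (h : LocalRun E obs s tr (l, ν, τ)) (t : ℕ) :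
    LocalRun E obs s tr (l, fun x => ν x + t, τ + t) := by
  simpa using h.append (.delay t (.refl _))

theorem snoc_silent {g : TGuard X} {op : Op} {Y : Finset X} (h : LocalRun E obs s tr (l, ν, τ))
    (he : (l, g, op, Y, l') ∈ E) (hg : g.satN ν) (ho : obs op = none) :
    LocalRun E obs s tr (l', fun x => if x ∈ Y then 0 else ν x, τ) := by
  simpa using h.append (.silent he hg ho (.refl _))

theorem snoc_observe {g : TGuard X} {op : Op} {Y : Finset X} {b : β}
    (h : LocalRun E obs s tr (l, ν, τ)) (he : (l, g, op, Y, l') ∈ E) (hg : g.satN ν)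
    (ho : obs op = some b) :
    LocalRun E obs s (tr ++ [(b, τ)]) (l', fun x => if x ∈ Y then 0 else ν x, τ) :=
  h.append (.observe he hg ho (.refl _))

theorem delay_of_eq {ν' : X → ℕ} {τ' : ℕ} (t : ℕ) (hν : ∀ x, ν' x = ν x + t) (hτ : τ' = τ + t)
    (h : LocalRun E obs (l, ν', τ') tr e) : LocalRun E obs (l, ν, τ) tr e := by
  obtain rfl : ν' = fun x => ν x + t := funext hν
  subst hτ
  exact .delay t h

theorem exists_split_at_time (h : LocalRun E obs s tr e) {u : ℕ} (hsu : s.2.2 ≤ u)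
    (hue : u ≤ e.2.2) :
    ∃ m tr₁ tr₂, LocalRun E obs s tr₁ m ∧ LocalRun E obs m tr₂ e ∧ m.2.2 = u ∧
      tr = tr₁ ++ tr₂ ∧ ∀ x ∈ tr₁, x.2 < u := by
  induction h with
  | refl s => exact ⟨s, [], [], .refl s, .refl s, le_antisymm hsu hue, rfl, by simp⟩
  | @delay l ν τ tr e t h ih =>
    by_cases hu : u ≤ τ + t
    · refine ⟨(l, fun x => ν x + (u - τ), u), [], tr, ?_, ?_, rfl, rfl, by simp⟩
      · exact .delay_of_eq (u - τ) (fun _ => rfl) (by simp only at hsu; omega) (.refl _)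
      · exact .delay_of_eq (τ + t - u) (fun _ => by simp only at hsu ⊢; omega)
          (by simp only at hsu; omega) h
    · obtain ⟨m, tr₁, tr₂, h₁, h₂, hm, rfl, hlt⟩ := ih (by simp only; omega) hue
      exact ⟨m, tr₁, tr₂, .delay t h₁, h₂, hm, rfl, hlt⟩
  | @silent l ν τ g op Y l' tr e he hg ho h ih =>
    by_cases hu : u ≤ τ
    · exact ⟨_, [], tr, .refl _, .silent he hg ho h, le_antisymm hsu hu, rfl, by simp⟩
    · obtain ⟨m, tr₁, tr₂, h₁, h₂, hm, rfl, hlt⟩ := ih (by simp only; omega) hue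
      exact ⟨m, tr₁, tr₂, .silent he hg ho h₁, h₂, hm, rfl, hlt⟩
  | @observe l ν τ g op Y l' tr e b he hg ho h ih =>
    by_cases hu : u ≤ τ
    · exact ⟨_, [], _, .refl _, .observe he hg ho h, le_antisymm hsu hu, rfl, by simp⟩
    · obtain ⟨m, tr₁, tr₂, h₁, h₂, hm, rfl, hlt⟩ := ih (by simp only; omega) hue
      refine ⟨m, (b, τ) :: tr₁, tr₂, .observe he hg ho h₁, h₂, hm, rfl, ?_⟩
      simp only [List.mem_cons, forall_eq_or_imp]
      exact ⟨by omega, hlt⟩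

theorem exists_split_at_observe {b : β} {σ : ℕ} (h : LocalRun E obs s ((b, σ) :: tr) e) :
    ∃ l ν g op Y l', LocalRun E obs s [] (l, ν, σ) ∧ (l, g, op, Y, l') ∈ E ∧ g.satN ν ∧
      obs op = some b ∧ LocalRun E obs (l', fun x => if x ∈ Y then 0 else ν x, σ) tr e := by
  generalize htr : (b, σ) :: tr = tr' at h
  induction h with
  | refl => cases htr
  | delay t _ ih =>
    obtain ⟨l, ν, g, op, Y, l', h₁, h₂⟩ := ih htr
    exact ⟨l, ν, g, op, Y, l', .delay t h₁, h₂⟩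
  | silent he hg ho _ ih =>
    obtain ⟨l, ν, g, op, Y, l', h₁, h₂⟩ := ih htr
    exact ⟨l, ν, g, op, Y, l', .silent he hg ho h₁, h₂⟩
  | observe he hg ho h =>
    obtain ⟨⟨rfl, rfl⟩, rfl⟩ := List.cons.inj htr
    exact ⟨_, _, _, _, _, _, .refl _, he, hg, ho, h⟩

end LocalRun

end

def OpA.obs : OpA α → Option α
  | .nop => none
  | .write a => some a

def OpB.obs : OpB α → Option (α × Set ℕ)
  | .nop => none
  | .read a I => some (a, I)

theorem OpA.eq_nop_of_obs {op : OpA α} (h : op.obs = none) : op = .nop := by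
  cases op <;> simp_all [OpA.obs]

theorem OpA.eq_write_of_obs {op : OpA α} {a : α} (h : op.obs = some a) : op = .write a := by
  cases op <;> simp_all [OpA.obs]

theorem OpB.eq_nop_of_obs {op : OpB α} (h : op.obs = none) : op = .nop := by
  cases op <;> simp_all [OpB.obs]

theorem OpB.eq_read_of_obs {op : OpB α} {b : α × Set ℕ} (h : op.obs = some b) :
    op = .read b.1 b.2 := by
  cases op <;> simp only [OpB.obs, reduceCtorEq, Option.some.injEq] at h
  subst h
  rfl

abbrev TwoCTA.RunA (M : TwoCTA LA LB XA XB α) := LocalRun M.edgesA (OpA.obs (α := α))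

abbrev TwoCTA.RunB (M : TwoCTA LA LB XA XB α) := LocalRun M.edgesB (OpB.obs (α := α))

/-- `w = (a, s)` is a write of `a` at local time `s` of `A`, and `r = ((a, I), r')` a read
of `a` with age constraint `I` at local time `r'` of `B`. -/
def Delivers (w : α × ℕ) (r : (α × Set ℕ) × ℕ) : Prop :=
  w.1 = r.1.1 ∧ w.2 ≤ r.2 ∧ r.2 - w.2 ∈ r.1.2

/-- The channel content at time `T` when the writes `P` (oldest first, with their
timestamps) are pending. -/
def channel (T : ℕ) (P : List (α × ℕ)) : List (α × ℕ) :=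
  (P.map fun w => (w.1, T - w.2)).reverse

@[simp]
theorem channel_nil (T : ℕ) : channel T ([] : List (α × ℕ)) = [] := rfl

theorem channel_eq_nil {T : ℕ} {P : List (α × ℕ)} : channel T P = [] ↔ P = [] := by
  simp [channel]

theorem channel_cons (T : ℕ) (w : α × ℕ) (P : List (α × ℕ)) :
    channel T (w :: P) = channel T P ++ [(w.1, T - w.2)] := by
  simp [channel]

theorem channel_append_write (T : ℕ) (a : α) (P : List (α × ℕ)) :
    channel T (P ++ [(a, T)]) = (a, 0) :: channel T P := by
  simp [channel]

theorem channel_delay {T : ℕ} {P : List (α × ℕ)} (hP : ∀ w ∈ P, w.2 ≤ T) (t : ℕ) :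
    (channel T P).map (fun m => (m.1, m.2 + t)) = channel (T + t) P := by
  simp only [channel, List.map_reverse, List.map_map]
  congr 1
  refine List.map_congr_left fun w hw => ?_
  simp only [Function.comp, Prod.mk.injEq, true_and]
  have := hP w hw
  omega

theorem List.Forall₂.exists_prefix_of_append {γ δ : Type} {R : γ → δ → Prop}
    {l₁ l₂ : List γ} {r₁ r₂ : List δ} (h : List.Forall₂ R (l₁ ++ l₂) (r₁ ++ r₂))
    (hR : ∀ x ∈ l₂, ∀ y ∈ r₁, ¬ R x y) :
    ∃ l₁' l₁'', l₁ = l₁' ++ l₁'' ∧ List.Forall₂ R l₁' r₁ ∧ List.Forall₂ R (l₁'' ++ l₂) r₂ := by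
  induction r₁ generalizing l₁ with
  | nil => exact ⟨[], l₁, rfl, .nil, h⟩
  | cons y r₁ ih =>
    cases l₁ with
    | nil =>
      cases h with
      | cons hxy _ => exact absurd hxy (hR _ List.mem_cons_self _ List.mem_cons_self)
    | cons x l₁ =>
      obtain ⟨hxy, h⟩ := List.forall₂_cons.1 h
      obtain ⟨l₁', l₁'', rfl, h₁, h₂⟩ :=
        ih h fun x hx y hy => hR x hx y (List.mem_cons_of_mem _ hy)
      exact ⟨x :: l₁', l₁'', rfl, .cons hxy h₁, h₂⟩

section

variable {M : TwoCTA LA LB XA XB α}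

/-- In a synchronous run of duration `T`, the writes of `A` are those already read by `B`
followed by those still in the channel. -/
def SyncInv (M : TwoCTA LA LB XA XB α) (γ : Conf2 LA LB XA XB α) : Prop :=
  ∃ T delivered pending trB,
    M.RunA (M.initA, fun _ => 0, 0) (delivered ++ pending) (γ.1.1, γ.1.2, T) ∧
    M.RunB (M.initB, fun _ => 0, 0) trB (γ.2.1.1, γ.2.1.2, T) ∧
    List.Forall₂ Delivers delivered trB ∧ γ.2.2 = channel T pending

theorem SyncInv.step {γ γ' : Conf2 LA LB XA XB α} (h : SyncInv M γ) (hs : Step M γ γ') :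
    SyncInv M γ' := by
  obtain ⟨T, delivered, pending, trB, hA, hB, hD, hch⟩ := h
  obtain ⟨t, hs⟩ := hs
  cases hs with
  | time t lA νA lB νB w =>
    refine ⟨T + t, delivered, pending, trB, hA.snoc_delay t, hB.snoc_delay t, hD, ?_⟩
    simp only at hch ⊢
    rw [hch, channel_delay fun w hw => (hA.time_mem_Icc (List.mem_append_right _ hw)).2]
  | anop lB νB w he hg =>
    exact ⟨T, delivered, pending, trB, hA.snoc_silent he hg rfl, hB, hD, hch⟩
  | @awrite lA νA g a Y lA' lB νB w he hg =>
    refine ⟨T, delivered, pending ++ [(a, T)], trB, ?_, hB, hD, ?_⟩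
    · simpa using hA.snoc_observe he hg rfl
    · simp only at hch ⊢
      rw [hch, channel_append_write]
  | @bread lB νB g a I Y lB' t lA νA w he hg ht =>
    obtain _ | ⟨m, pending⟩ := pending
    · simp at hch
    rw [channel_cons] at hch
    obtain ⟨rfl, hm⟩ := List.append_inj' hch rfl
    simp only [List.cons.injEq, Prod.mk.injEq, and_true] at hm
    obtain ⟨rfl, rfl⟩ := hm
    refine ⟨T, delivered ++ [m], pending, _, by simpa using hA,
      hB.snoc_observe (b := (m.1, I)) he hg rfl, List.rel_append hD (.cons ⟨rfl, ?_, ht⟩ .nil),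
      rfl⟩
    exact (hA.time_mem_Icc (by simp)).2
  | bnop lA νA w he hg =>
    exact ⟨T, delivered, pending, trB, hA, hB.snoc_silent he hg rfl, hD, hch⟩

theorem SyncInv.of_reflTransGen {γ : Conf2 LA LB XA XB α}
    (h : ReflTransGen (Step M)
      ((M.initA, fun _ => 0), (M.initB, fun _ => 0), ([] : List (α × ℕ))) γ) :
    SyncInv M γ := by
  induction h with
  | refl => exact ⟨0, [], [], [], .refl _, .refl _, .nil, rfl⟩
  | tail _ hs ih => exact ih.step hs

theorem reflTransGen_dStep_of_runA_nil {sA eA : LA × (XA → ℕ) × ℕ} (hA : M.RunA sA [] eA)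
    (sB : LB × (XB → ℕ) × ℕ) (h : eA.2.2 ≤ sB.2.2) :
    ReflTransGen (DStep M) (sA, sB, none) (eA, sB, none) := by
  generalize htr : [] = tr at hA
  induction hA with
  | refl => exact .refl
  | delay t hA ih => exact .head (DStep.atime t sB (hA.time_le.trans h)) (ih h htr)
  | silent he hg ho _ ih =>
    cases OpA.eq_nop_of_obs ho
    exact .head (DStep.anop sB he hg) (ih h htr)
  | observe => cases htr

theorem reflTransGen_dStep_of_runB_nil {sB eB : LB × (XB → ℕ) × ℕ} (hB : M.RunB sB [] eB)
    (sA : LA × (XA → ℕ) × ℕ) (p : Option (α × ℕ)) :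
    ReflTransGen (DStep M) (sA, sB, p)
      (sA, eB, p.map fun m => (m.1, m.2 + (eB.2.2 - sB.2.2))) := by
  generalize htr : [] = tr at hB
  induction hB generalizing p with
  | refl => convert ReflTransGen.refl; simp
  | @delay l ν τ tr e t hB ih =>
    have hτ := hB.time_le
    simp only at hτ
    convert ReflTransGen.head (DStep.btime t sA p) (ih _ htr) using 3
    rw [Option.map_map]
    congr 1
    funext m
    simp only [Function.comp, Prod.mk.injEq, true_and]
    omega
  | silent he hg ho _ ih =>
    cases OpB.eq_nop_of_obs ho
    exact .head (DStep.bnop sA p he hg) (ih p htr)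
  | observe => cases htr

/-- `A` runs up to its next write while `B` idles, then `B` catches up to the time of the
write if needed, `A` writes, and `B` runs up to the matching read. -/
theorem reflTransGen_dStep_of_runs {trA : List (α × ℕ)} {trB : List ((α × Set ℕ) × ℕ)}
    (hD : List.Forall₂ Delivers trA trB) {sA eA : LA × (XA → ℕ) × ℕ}
    {sB eB : LB × (XB → ℕ) × ℕ} (hA : M.RunA sA trA eA) (hB : M.RunB sB trB eB)
    (hs : sA.2.2 ≤ sB.2.2) (he : eA.2.2 = eB.2.2) :
    ReflTransGen (DStep M) (sA, sB, none) (eA, eB, none) := by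
  induction hD generalizing sA sB with
  | nil =>
    exact (reflTransGen_dStep_of_runB_nil hB sA none).trans
      (reflTransGen_dStep_of_runA_nil hA eB he.le)
  | @cons w r trA trB hwr _ ih =>
    obtain ⟨a, s⟩ := w
    obtain ⟨⟨a', I⟩, r⟩ := r
    obtain ⟨rfl, hsr, hage⟩ := hwr
    obtain ⟨lw, νw, g, op, Y, lw', hA₁, heA, hgA, hoA, hA₂⟩ := hA.exists_split_at_observe
    obtain ⟨lr, νr, gB, opB, YB, lr', hB₁, heB, hgB, hoB, hB₂⟩ := hB.exists_split_at_observe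
    cases OpA.eq_write_of_obs hoA
    cases OpB.eq_read_of_obs hoB
    have hsB : sB.2.2 ≤ r := hB₁.time_le
    obtain ⟨m, _, _, hB₁₁, hB₁₂, hm, htr, -⟩ :=
      hB₁.exists_split_at_time (u := max sB.2.2 s) (le_max_left _ _) (max_le hsB hsr)
    obtain ⟨rfl, rfl⟩ := List.append_eq_nil_iff.1 htr.symm
    have hmr : m.2.2 ≤ r := hB₁₂.time_le
    have hwrite := DStep.awrite m heA hgA (hm ▸ le_max_right _ _)
    have hread := DStep.bread (τB := r) (ag := m.2.2 - s + (r - m.2.2))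
      (lw', fun x => if x ∈ Y then 0 else νw x, s) heB hgB (by convert hage using 1; omega)
    exact (reflTransGen_dStep_of_runB_nil hB₁₁ sA none).trans
      ((reflTransGen_dStep_of_runA_nil hA₁ m (hm ▸ le_max_right _ _)).trans
      (.head hwrite ((reflTransGen_dStep_of_runB_nil hB₁₂ _ _).trans
      (.head hread (ih hA₂ hB₂ hsr)))))

/-- The writes of `A` are delivered by the reads of `B`, except the last one while it is
pending; its age is then `B`'s lead over `A`. -/
def DesyncInv (M : TwoCTA LA LB XA XB α) (γ : DConf LA LB XA XB α) : Prop :=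
  ∃ trA trB, M.RunA (M.initA, fun _ => 0, 0) trA γ.1 ∧
    M.RunB (M.initB, fun _ => 0, 0) trB γ.2.1 ∧ γ.1.2.2 ≤ γ.2.1.2.2 ∧
    match γ.2.2 with
    | none => List.Forall₂ Delivers trA trB
    | some (a, ag) => ∃ trD, trA = trD ++ [(a, γ.1.2.2)] ∧ List.Forall₂ Delivers trD trB ∧
        γ.1.2.2 + ag = γ.2.1.2.2

theorem DesyncInv.dStep {γ γ' : DConf LA LB XA XB α} (h : DesyncInv M γ) (hs : DStep M γ γ') :
    DesyncInv M γ' := by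
  obtain ⟨trA, trB, hA, hB, hle, hp⟩ := h
  cases hs with
  | atime t sB ht => exact ⟨trA, trB, hA.snoc_delay t, hB, ht, hp⟩
  | anop sB he hg => exact ⟨trA, trB, hA.snoc_silent he hg rfl, hB, hle, hp⟩
  | @awrite lA νA τA g a Y lA' sB he hg hτ =>
    exact ⟨_, trB, hA.snoc_observe he hg rfl, hB, hle, trA, rfl, hp, by simp only; omega⟩
  | btime t sA p =>
    refine ⟨trA, trB, hA, hB.snoc_delay t, by simp only at hle ⊢; omega, ?_⟩
    rcases p with _ | ⟨a, ag⟩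
    · exact hp
    · obtain ⟨trD, rfl, hD, hag⟩ := hp
      exact ⟨trD, rfl, hD, by simp only at hag ⊢; omega⟩
  | bnop sA p he hg =>
    refine ⟨trA, trB, hA, hB.snoc_silent he hg rfl, hle, ?_⟩
    rcases p with _ | ⟨a, ag⟩ <;> exact hp
  | @bread lB νB τB g a I Y lB' ag sA he hg hag =>
    obtain ⟨trD, rfl, hD, hsum⟩ := hp
    refine ⟨_, _, hA, hB.snoc_observe (b := (a, I)) he hg rfl, hle, ?_⟩
    refine List.rel_append hD (.cons ⟨rfl, hle, ?_⟩ .nil)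
    simp only at hsum ⊢
    convert hag using 1
    omega

theorem DesyncInv.of_reflTransGen {γ : DConf LA LB XA XB α}
    (h : ReflTransGen (DStep M) ((M.initA, fun _ => 0, 0), (M.initB, fun _ => 0, 0), none) γ) :
    DesyncInv M γ := by
  induction h with
  | refl => exact ⟨[], [], .refl _, .refl _, le_rfl, .nil⟩
  | tail _ hs ih => exact ih.dStep hs

theorem reflTransGen_step_of_runB {sB eB : LB × (XB → ℕ) × ℕ} {trB : List ((α × Set ℕ) × ℕ)}
    (hB : M.RunB sB trB eB) (lA : LA) (νA : XA → ℕ) {read pending : List (α × ℕ)}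
    (hP : ∀ w ∈ read ++ pending, w.2 ≤ sB.2.2) (hD : List.Forall₂ Delivers read trB) :
    ReflTransGen (Step M) ((lA, νA), (sB.1, sB.2.1), channel sB.2.2 (read ++ pending))
      ((lA, fun x => νA x + (eB.2.2 - sB.2.2)), (eB.1, eB.2.1), channel eB.2.2 pending) := by
  induction hB generalizing νA read with
  | refl s =>
    obtain rfl := List.forall₂_nil_right_iff.1 hD
    simpa using ReflTransGen.refl
  | @delay l ν τ trB e t hB ih =>
    have hτ : τ + t ≤ e.2.2 := hB.time_le
    have hstep : Step M ((lA, νA), (l, ν), channel τ (read ++ pending))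
        ((lA, fun x => νA x + t), (l, fun x => ν x + t), channel (τ + t) (read ++ pending)) :=
      ⟨t, channel_delay hP t ▸ StepD.time t lA νA l ν _⟩
    convert ReflTransGen.head hstep
      (ih _ (fun w hw => (hP w hw).trans (Nat.le_add_right _ _)) hD) using 4
    simp only
    omega
  | silent he hg ho _ ih =>
    cases OpB.eq_nop_of_obs ho
    exact .head ⟨0, StepD.bnop lA νA _ he hg⟩ (ih νA hP hD)
  | @observe l ν τ g op Y l' trB e b he hg ho _ ih =>
    cases OpB.eq_read_of_obs ho
    obtain ⟨w, read, ⟨hwb, -, hage⟩, hD', rfl⟩ := List.forall₂_cons_right_iff.1 hD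
    rw [List.cons_append, channel_cons, hwb]
    exact .head ⟨0, StepD.bread lA νA _ he hg hage⟩
      (ih νA (fun v hv => hP v (List.mem_cons_of_mem _ hv)) hD')

/-- Events of the two runs are executed in the order of their timestamps: `A` moves until it
lets time elapse, and then `B` catches up; the reads of `B` before that time can only
consume messages that are already pending. -/
theorem reflTransGen_step_of_runs {sA eA : LA × (XA → ℕ) × ℕ} {trA : List (α × ℕ)}
    (hA : M.RunA sA trA eA) {sB eB : LB × (XB → ℕ) × ℕ} {trB : List ((α × Set ℕ) × ℕ)}
    (hB : M.RunB sB trB eB) (hs : sA.2.2 = sB.2.2) (he : eA.2.2 = eB.2.2)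
    {pending : List (α × ℕ)} (hP : ∀ w ∈ pending, w.2 ≤ sA.2.2)
    (hD : List.Forall₂ Delivers (pending ++ trA) trB) :
    ReflTransGen (Step M) ((sA.1, sA.2.1), (sB.1, sB.2.1), channel sA.2.2 pending)
      ((eA.1, eA.2.1), (eB.1, eB.2.1), []) := by
  induction hA generalizing sB trB pending with
  | refl s =>
    rw [List.append_nil] at hD
    convert reflTransGen_step_of_runB hB s.1 s.2.1 (pending := []) (by simpa [hs] using hP)
      (by simpa using hD) using 2
    · rw [hs, List.append_nil]
    · simp [← hs, he]
    · rfl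
  | @delay l ν τ trA e t hA ih =>
    simp only at hs hP
    have hτ : τ + t ≤ e.2.2 := hA.time_le
    obtain ⟨m, rd₁, rd₂, hB₁, hB₂, hm, rfl, hlt⟩ :=
      hB.exists_split_at_time (u := τ + t) (by omega) (by omega)
    obtain ⟨read, pending', rfl, hD₁, hD₂⟩ := hD.exists_prefix_of_append fun w hw r hr hwr =>
      (hlt r hr).not_ge ((hA.time_mem_Icc hw).1.trans hwr.2.1)
    have hcatch := reflTransGen_step_of_runB hB₁ l ν (by simpa [← hs] using hP) hD₁
    rw [hm, ← hs, Nat.add_sub_cancel_left] at hcatch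
    refine hcatch.trans (ih hB₂ hm.symm he (fun w hw => ?_) hD₂)
    exact (hP w (List.mem_append_right _ hw)).trans (Nat.le_add_right _ _)
  | silent heA hg ho _ ih =>
    cases OpA.eq_nop_of_obs ho
    exact .head ⟨0, StepD.anop _ _ _ heA hg⟩ (ih hB hs he hP hD)
  | @observe l ν τ g op Y l' trA e a heA hg ho _ ih =>
    cases OpA.eq_write_of_obs ho
    refine .head ⟨0, StepD.awrite _ _ _ heA hg⟩ ?_
    rw [← channel_append_write]
    refine ih hB hs he (fun w hw => ?_) (by simpa using hD)
    rcases List.mem_append.1 hw with hw | hw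
    · exact hP w hw
    · rw [List.mem_singleton.1 hw]

end

/-- reachability of empty-channel configurations is invariant under
de-synchronization: `((l_A,ν_A),(l_B,ν_B),ε)` is reachable in the synchronous semantics
iff it is reachable in the de-synchronized semantics with both processes having elapsed
the same total time `τ` and no pending message. -/
theorem stmt19 (M : TwoCTA LA LB XA XB α) (lA : LA) (νA : XA → ℕ)
    (lB : LB) (νB : XB → ℕ) :
    Relation.ReflTransGen (Step M)
        ((M.initA, fun _ => 0), (M.initB, fun _ => 0), ([] : List (α × ℕ)))
        ((lA, νA), (lB, νB), []) ↔
    ∃ τ : ℕ, Relation.ReflTransGen (DStep M)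
        ((M.initA, fun _ => 0, 0), (M.initB, fun _ => 0, 0), none)
        ((lA, νA, τ), (lB, νB, τ), none) := by
  constructor
  · intro h
    obtain ⟨T, delivered, pending, trB, hA, hB, hD, hch⟩ := SyncInv.of_reflTransGen h
    obtain rfl : pending = [] := channel_eq_nil.1 hch.symm
    rw [List.append_nil] at hA
    exact ⟨T, reflTransGen_dStep_of_runs hD hA hB le_rfl rfl⟩
  · rintro ⟨τ, h⟩
    obtain ⟨trA, trB, hA, hB, -, hD⟩ := DesyncInv.of_reflTransGen h
    exact reflTransGen_step_of_runs hA hB rfl rfl (pending := []) (by simp) hD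
end
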